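/- arXiv:2406.03698 — 3 statements merged into one kernel-verified Lean document; each statement's English description precedes it below -/
import Mathlib

section
/- Let P = conv(S) + cone(R) for finite sets S, R ⊆ R^n with S nonempty. Then the polar P⁺ equals {z ∈ R^n : 1 + ⟪v, z⟫ ≥ 0 for all v ∈ S, and ⟪r, z⟫ ≥ 0 for all r ∈ R}. -/
open RealInnerProductSpace Pointwise

noncomputable def polarP {n : ℕ} (P : Set (EuclideanSpace ℝ (Fin n))) :
    Set (EuclideanSpace ℝ (Fin n)) :=
  {z | ∀ x ∈ P, 1 + ⟪z, x⟫ ≥ 0}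

noncomputable def coneOf {n : ℕ} (R : Finset (EuclideanSpace ℝ (Fin n))) :
    Set (EuclideanSpace ℝ (Fin n)) :=
  {x | ∃ μ : EuclideanSpace ℝ (Fin n) → ℝ, (∀ r, 0 ≤ μ r) ∧ x = ∑ r ∈ R, μ r • r}
theorem stmt1 {n : ℕ} (S R : Finset (EuclideanSpace ℝ (Fin n))) (hS : S.Nonempty)
    (P : Set (EuclideanSpace ℝ (Fin n)))
    (hP : P = convexHull ℝ (S : Set (EuclideanSpace ℝ (Fin n))) + coneOf R) :
    polarP P = {z | (∀ v ∈ S, 1 + ⟪v, z⟫ ≥ 0) ∧ ∀ r ∈ R, ⟪r, z⟫ ≥ 0} := by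
  classical
  have hzero : (0 : EuclideanSpace ℝ (Fin n)) ∈ coneOf R :=
    ⟨0, fun r => le_refl 0, by simp⟩
  ext z
  constructor
  · intro hz
    have hmem : ∀ v ∈ S, ∀ b ∈ coneOf R, v + b ∈ P := by
      intro v hv b hb
      rw [hP]
      exact Set.add_mem_add (subset_convexHull ℝ _ hv) hb
    constructor
    · intro v hv
      have := hz (v + 0) (hmem v hv 0 hzero)
      rw [add_zero] at this
      rwa [real_inner_comm]
    · intro r hr
      rw [real_inner_comm]
      by_contra hneg
      push_neg at hneg
      obtain ⟨v, hv⟩ := hS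
      set c := ⟪z, r⟫ with hc
      set t := (2 + ⟪z, v⟫) / (-c) with ht
      have hcpos : 0 < -c := by linarith
      have h1 := hz (v + 0) (hmem v hv 0 hzero)
      rw [add_zero] at h1
      have ht0 : 0 ≤ t := div_nonneg (by linarith) (le_of_lt hcpos)
      have hbc : t • r ∈ coneOf R := by
        refine ⟨fun x => if x = r then t else 0, fun x => by dsimp; split <;> simp [ht0], ?_⟩
        simp [ite_smul, Finset.sum_ite_eq', hr]
      have h2 := hz (v + t • r) (hmem v hv _ hbc)
      rw [inner_add_right, real_inner_smul_right] at h2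
      have htc : t * (-c) = 2 + ⟪z, v⟫ :=
        div_mul_cancel₀ _ (ne_of_gt hcpos)
      rw [← hc] at h2
      nlinarith
  · intro ⟨h1, h2⟩ x hx
    rw [hP] at hx
    obtain ⟨a, ha, b, hb, rfl⟩ := hx
    have hb' : 0 ≤ ⟪z, b⟫ := by
      obtain ⟨μ, hμ, rfl⟩ := hb
      rw [inner_sum]
      apply Finset.sum_nonneg
      intro r hr
      rw [real_inner_smul_right]
      exact mul_nonneg (hμ r) (by rw [real_inner_comm]; exact h2 r hr)
    have ha' : 0 ≤ 1 + ⟪z, a⟫ := by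
      have hconv : (S : Set (EuclideanSpace ℝ (Fin n))) ⊆ {w | -1 ≤ ⟪z, w⟫} := by
        intro v hv
        have := h1 v hv
        rw [real_inner_comm] at this
        show -1 ≤ ⟪z, v⟫
        linarith
      have hC : Convex ℝ {w : EuclideanSpace ℝ (Fin n) | -1 ≤ ⟪z, w⟫} :=
        convex_halfSpace_ge (innerSL ℝ z).toLinearMap.isLinear (-1)
      have hm := convexHull_min hconv hC ha
      have : -1 ≤ ⟪z, a⟫ := hm
      linarith
    rw [inner_add_right]
    linarith
end

section
/- A nonempty closed convex set P ⊆ R^n satisfies P = P⁺⁺ if and only if 0 ∈ P. -/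
open RealInnerProductSpace Pointwise

theorem stmt7 {n : ℕ} (P : Set (EuclideanSpace ℝ (Fin n))) (hne : P.Nonempty)
    (hcl : IsClosed P) (hcv : Convex ℝ P) :
    P = polarP (polarP P) ↔ (0 : EuclideanSpace ℝ (Fin n)) ∈ P := by
  constructor
  · intro h
    rw [h]
    intro x hx
    simp [inner_zero_left]
  · intro h0
    apply Set.Subset.antisymm
    · intro x hx z hz
      have := hz x hx
      rwa [real_inner_comm]
    · intro y hy
      by_contra hyP
      obtain ⟨f, u, hfu, hyu⟩ := geometric_hahn_banach_closed_point hcv hcl hyP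
      have hu : 0 < u := by have := hfu 0 h0; simpa using this
      set v := (InnerProductSpace.toDual ℝ (EuclideanSpace ℝ (Fin n))).symm f with hv
      have hvf : ∀ x, ⟪v, x⟫ = f x := fun x => by
        rw [hv, InnerProductSpace.toDual_symm_apply]
      set z : EuclideanSpace ℝ (Fin n) := (-(1/u)) • v with hzdef
      have hz : z ∈ polarP P := by
        intro x hx
        have hfx : f x < u := hfu x hx
        have : ⟪z, x⟫ = -(1/u) * f x := by
          rw [hzdef, real_inner_smul_left, hvf]
        rw [this]
        rw [ge_iff_le, ← sub_nonneg] at *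
        have h1 : (1/u) * f x < (1/u) * u := by
          apply mul_lt_mul_of_pos_left hfx (by positivity)
        rw [one_div_mul_cancel (ne_of_gt hu)] at h1
        nlinarith
      have hcon := hy z hz
      have : ⟪y, z⟫ = -(1/u) * f y := by
        rw [real_inner_comm, hzdef, real_inner_smul_left, hvf]
      rw [this] at hcon
      have h2 : (1/u) * u < (1/u) * f y := by
        apply mul_lt_mul_of_pos_left hyu (by positivity)
      rw [one_div_mul_cancel (ne_of_gt hu)] at h2
      nlinarith
end

section
/- Let P = conv(S) + cone(R) with S, R finite and S nonempty. If 0 ∈ P, then P equals the polar of Q, where Q = {z : 1 + ⟪v, z⟫ ≥ 0 for all v ∈ S, ⟪r, z⟫ ≥ 0 for all r ∈ R}. -/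
open RealInnerProductSpace Pointwise

/-!
`P` is closed: `conv S` is compact, and a finitely generated cone is closed because, by the conic
Carathéodory argument, it is a finite union of cones over linearly independent sets, each the image
of a closed orthant under an injective linear map. Testing a polar vector on the points of `S` and
on the rays `s + t • r` shows that the polar of `P` is exactly `Q`. As `P` is closed, convex and
contains `0`, separation gives the bipolar equation `P = P⁺⁺ = Q⁺`.
-/

section

variable {n : ℕ}

local notation "E" => EuclideanSpace ℝ (Fin n)

lemma zero_mem_coneOf (R : Finset E) : (0 : E) ∈ coneOf R :=
  ⟨0, fun _ => le_rfl, by simp⟩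

lemma mem_coneOf_of_mem {R : Finset E} {r : E} (hr : r ∈ R) : r ∈ coneOf R := by
  classical
  refine ⟨fun x => if x = r then 1 else 0, fun x => by dsimp only; split_ifs <;> norm_num, ?_⟩
  simp [hr]

lemma smul_mem_coneOf {R : Finset E} {x : E} {t : ℝ} (ht : 0 ≤ t) (hx : x ∈ coneOf R) :
    t • x ∈ coneOf R := by
  obtain ⟨μ, hμ, rfl⟩ := hx
  exact ⟨fun r => t * μ r, fun r => mul_nonneg ht (hμ r), by simp [Finset.smul_sum, mul_smul]⟩

lemma convex_coneOf (R : Finset E) : Convex ℝ (coneOf R) := by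
  rintro _ ⟨μ, hμ, rfl⟩ _ ⟨ν, hν, rfl⟩ a b ha hb -
  refine ⟨fun r => a * μ r + b * ν r,
    fun r => add_nonneg (mul_nonneg ha (hμ r)) (mul_nonneg hb (hν r)), ?_⟩
  simp [Finset.smul_sum, Finset.sum_add_distrib, add_smul, mul_smul]

lemma coneOf_mono {T R : Finset E} (h : T ⊆ R) : coneOf T ⊆ coneOf R := by
  classical
  rintro _ ⟨μ, hμ, rfl⟩
  refine ⟨fun r => if r ∈ T then μ r else 0,
    fun r => by dsimp only; split_ifs <;> simp [hμ r], ?_⟩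
  simp only [ite_smul, zero_smul, Finset.sum_ite_mem, Finset.inter_eq_right.mpr h]

lemma coneOf_eq_image_linearCombination (R : Finset E) :
    coneOf R = Fintype.linearCombination ℝ ((↑) : R → E) '' Set.Ici 0 := by
  classical
  ext x
  simp only [coneOf, Fintype.linearCombination_apply, Set.mem_ofPred_eq, Set.mem_image,
    Set.mem_Ici]
  constructor
  · rintro ⟨μ, hμ, rfl⟩
    exact ⟨fun r => μ r, fun r => hμ r, (R.sum_attach fun r => μ r • r).symm ▸ rfl⟩
  · rintro ⟨ν, hν, rfl⟩
    refine ⟨fun r => if h : r ∈ R then ν ⟨r, h⟩ else 0,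
      fun r => by dsimp only; split_ifs <;> [exact hν _; rfl], ?_⟩
    rw [← R.sum_attach]
    simp

lemma isClosed_coneOf_of_linearIndepOn {R : Finset E} (h : LinearIndepOn ℝ id (R : Set E)) :
    IsClosed (coneOf R) := by
  rw [coneOf_eq_image_linearCombination]
  have hinj : Function.Injective (Fintype.linearCombination ℝ ((↑) : R → E)) :=
    linearIndependent_iff_injective_fintypeLinearCombination.mp h
  exact (LinearMap.isClosedEmbedding_of_injective (LinearMap.ker_eq_bot.mpr hinj)).isClosedMap
    _ isClosed_Ici

lemma sum_smul_mem_coneOf {R : Finset E} {μ : E → ℝ} (hμ : ∀ r ∈ R, 0 ≤ μ r) :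
    ∑ r ∈ R, μ r • r ∈ coneOf R :=
  ⟨fun r => max (μ r) 0, fun r => le_max_right _ _,
    Finset.sum_congr rfl fun r hr => by simp [max_eq_left (hμ r hr)]⟩

lemma coneOf_subset_biUnion_erase {R : Finset E} (h : ¬LinearIndepOn ℝ id (R : Set E)) :
    coneOf R ⊆ ⋃ r ∈ R, coneOf (R.erase r) := by
  classical
  rintro _ ⟨μ, hμ, rfl⟩
  obtain ⟨c, hc, hpos⟩ :
      ∃ c : E → ℝ, ∑ r ∈ R, c r • r = 0 ∧ (R.filter (0 < c ·)).Nonempty := by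
    obtain ⟨c, hc, i, hiR, hci⟩ := not_linearIndepOn_finset_iff.mp h
    simp only [id] at hc
    rcases hci.lt_or_gt with hneg | hpos
    · exact ⟨-c, by simp [hc], i, by simp [hiR, hneg]⟩
    · exact ⟨c, hc, i, by simp [hiR, hpos]⟩
  -- Move along the relation `c` until the first coefficient of `μ` hits zero.
  obtain ⟨r₀, hr₀, hmin⟩ := Finset.exists_min_image _ (fun r => μ r / c r) hpos
  rw [Finset.mem_filter] at hr₀
  set t := μ r₀ / c r₀
  have ht : 0 ≤ t := div_nonneg (hμ r₀) hr₀.2.le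
  have hsum : ∑ r ∈ R.erase r₀, (μ r - t * c r) • r = ∑ r ∈ R, μ r • r := by
    rw [Finset.sum_erase R (by simp [t, div_mul_cancel₀ _ hr₀.2.ne'])]
    simp [sub_smul, mul_smul, Finset.sum_sub_distrib, ← Finset.smul_sum, hc]
  refine Set.mem_biUnion hr₀.1 (hsum ▸ sum_smul_mem_coneOf fun r hr => ?_)
  have hrR := Finset.mem_of_mem_erase hr
  by_cases hcr : 0 < c r
  · have := (le_div_iff₀ hcr).mp (hmin r (Finset.mem_filter.mpr ⟨hrR, hcr⟩))
    linarith
  · nlinarith [hμ r]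

lemma isClosed_coneOf (R : Finset E) : IsClosed (coneOf R) := by
  induction R using Finset.strongInduction with
  | H R ih =>
    by_cases h : LinearIndepOn ℝ id (R : Set E)
    · exact isClosed_coneOf_of_linearIndepOn h
    · have hR : coneOf R = ⋃ r ∈ R, coneOf (R.erase r) :=
        (coneOf_subset_biUnion_erase h).antisymm
          (Set.iUnion₂_subset fun r _ => coneOf_mono (R.erase_subset r))
      rw [hR]
      exact R.finite_toSet.isClosed_biUnion fun r hr => ih _ (Finset.erase_ssubset hr)

lemma inner_nonneg_of_mem_coneOf {R : Finset E} {z x : E} (hz : ∀ r ∈ R, 0 ≤ ⟪r, z⟫)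
    (hx : x ∈ coneOf R) : 0 ≤ ⟪x, z⟫ := by
  obtain ⟨μ, hμ, rfl⟩ := hx
  rw [sum_inner]
  exact Finset.sum_nonneg fun r hr => by
    rw [real_inner_smul_left]
    exact mul_nonneg (hμ r) (hz r hr)

lemma subset_polarP_polarP (P : Set E) : P ⊆ polarP (polarP P) :=
  fun x hx _ hz => real_inner_comm x _ ▸ hz x hx

lemma polarP_polarP_of_isClosed {P : Set E} (hc : IsClosed P) (hconv : Convex ℝ P)
    (h0 : (0 : E) ∈ P) : polarP (polarP P) = P := by
  refine Set.Subset.antisymm (fun x hx => ?_) (subset_polarP_polarP P)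
  by_contra hxP
  obtain ⟨f, u, hfP, hfx⟩ := geometric_hahn_banach_closed_point hconv hc hxP
  have hu : 0 < u := by simpa using hfP 0 h0
  -- The separating functional, rescaled so that its level `u` becomes `-1`, lies in the polar.
  set w : E := -u⁻¹ • (InnerProductSpace.toDual ℝ E).symm f
  have hw : ∀ y, ⟪w, y⟫ = -(f y / u) := fun y => by
    simp [w, real_inner_smul_left, InnerProductSpace.toDual_symm_apply, div_eq_inv_mul]
  have hwP : w ∈ polarP P := fun p hp => by
    have := (div_lt_one hu).mpr (hfP p hp)
    rw [hw]; linarith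
  have := hx w hwP
  rw [real_inner_comm, hw] at this
  have := (one_lt_div hu).mpr hfx
  linarith

lemma nonneg_of_forall_add_mul_nonneg {a b : ℝ} (h : ∀ t ≥ (0 : ℝ), 0 ≤ a + t * b) :
    0 ≤ b := by
  by_contra! hb
  have := h ((a + 1) / -b) (div_nonneg (by linarith [h 0 le_rfl]) (by linarith))
  rw [div_mul_eq_mul_div, div_neg, mul_div_cancel_right₀ _ hb.ne] at this
  linarith

lemma polarP_convexHull_add_coneOf {S R : Finset E} (hS : S.Nonempty) :
    polarP (convexHull ℝ (S : Set E) + coneOf R) =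
      {z | (∀ v ∈ S, 1 + ⟪v, z⟫ ≥ 0) ∧ ∀ r ∈ R, ⟪r, z⟫ ≥ 0} := by
  ext z
  constructor
  · intro hz
    have hmem : ∀ v ∈ S, ∀ c ∈ coneOf R, v + c ∈ convexHull ℝ (S : Set E) + coneOf R :=
      fun v hv c hc => Set.add_mem_add (subset_convexHull ℝ _ hv) hc
    refine ⟨fun v hv => ?_, fun r hr => ?_⟩
    · simpa [real_inner_comm] using hz _ (hmem v hv 0 (zero_mem_coneOf R))
    · obtain ⟨s, hs⟩ := hS
      refine nonneg_of_forall_add_mul_nonneg (a := 1 + ⟪s, z⟫) fun t ht => ?_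
      have := hz _ (hmem s hs _ (smul_mem_coneOf ht (mem_coneOf_of_mem hr)))
      rw [inner_add_right, inner_smul_right] at this
      simpa [real_inner_comm, add_assoc] using this
  · rintro ⟨hzS, hzR⟩ _ ⟨s, hs, c, hc, rfl⟩
    have hs' : -1 ≤ ⟪s, z⟫ := by
      have : (S : Set E) ⊆ {y | -1 ≤ ⟪y, z⟫} := fun v hv => by
        simp only [Set.mem_ofPred_eq]; linarith [hzS v hv]
      exact convexHull_min this (convex_halfSpace_ge ((innerₗ E).flip z).isLinear _) hs
    have hc' := inner_nonneg_of_mem_coneOf hzR hc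
    show 1 + ⟪z, s + c⟫ ≥ 0
    rw [inner_add_right, real_inner_comm s z, real_inner_comm c z]
    linarith

end

theorem stmt11 {n : ℕ} (S R : Finset (EuclideanSpace ℝ (Fin n))) (hS : S.Nonempty)
    (P : Set (EuclideanSpace ℝ (Fin n)))
    (hP : P = convexHull ℝ (S : Set (EuclideanSpace ℝ (Fin n))) + coneOf R)
    (h0 : (0 : EuclideanSpace ℝ (Fin n)) ∈ P) :
    P = polarP {z | (∀ v ∈ S, 1 + ⟪v, z⟫ ≥ 0) ∧ ∀ r ∈ R, ⟪r, z⟫ ≥ 0} := by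
  subst hP
  have hclosed :=
    (isClosed_coneOf R).add_left_of_isCompact (S.finite_toSet.isCompact_convexHull ℝ)
  have hconv := (convex_convexHull ℝ (S : Set _)).add (convex_coneOf R)
  rw [← polarP_convexHull_add_coneOf hS, polarP_polarP_of_isClosed hclosed hconv h0]
end
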